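/- arXiv:1001.2067 — 6 statements merged into one kernel-verified Lean document; each statement's English description precedes it below -/
import Mathlib

section
/- Let (Ω, F, P) be a probability space carrying a sequence (B_n)_{n≥1} of i.i.d. random variables with P(B_n = 1) = P(B_n = 0) = 1/2, a constant q ≥ 1, and a sequence (X_n)_{n≥0} of [0,1]-valued random variables such that: X_n is measurable with respect to σ(X_0, B_1, …, B_n); B_{n+1} is independent of σ(X_0, B_1, …, B_n); X_n converges almost surely to a random variable X_∞; and pathwise, whenever X_n ∉ {0,1}, one has X_n ≤ X_{n+1} ≤ q·X_n if B_{n+1} = 1 and X_{n+1} = X_n² if B_{n+1} = 0, while X_{n+1} = X_n whenever X_n ∈ {0,1}. Then P(X_∞ ∈ {0,1}) = 1. -/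
open MeasureTheory ProbabilityTheory Filter
open scoped ENNReal Topology

/-!
By the second Borel–Cantelli lemma, almost surely `B (n + 1) = 0` for infinitely many `n`.
At each such step `X (n + 1) = X n ^ 2` (also when `X n ∈ {0, 1}`, as `0` and `1` are fixed by
squaring), so along a subsequence the limit satisfies `X∞ = X∞ ^ 2`, i.e. `X∞ ∈ {0, 1}`.
-/

theorem eq_zero_or_one_of_tendsto_of_frequently_sq {x : ℕ → ℝ} {L : ℝ}
    (hx : Tendsto x atTop (𝓝 L)) (hsq : ∃ᶠ n in atTop, x (n + 1) = x n ^ 2) :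
    L = 0 ∨ L = 1 := by
  have hL : L = L ^ 2 :=
    tendsto_nhds_unique_of_frequently_eq (hx.comp (tendsto_add_atTop_nat 1)) (hx.pow 2) hsq
  have : L * (L - 1) = 0 := by linear_combination -hL
  rcases mul_eq_zero.mp this with h | h
  · exact Or.inl h
  · exact Or.inr (sub_eq_zero.mp h)

theorem ENNReal.tsum_eq_top_of_tendsto_ne_zero {f : ℕ → ℝ≥0∞} {p : ℝ≥0∞}
    (hf : Tendsto f atTop (𝓝 p)) (hp : p ≠ 0) : ∑' n, f n = ∞ := by
  by_contra h
  exact hp (tendsto_nhds_unique hf (ENNReal.tendsto_atTop_zero_of_tsum_ne_top h))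

section BorelCantelli

variable {Ω : Type*} [MeasurableSpace Ω] {P : Measure Ω}

theorem ae_frequently_mem_of_iIndepSet {s : ℕ → Set Ω} (hsm : ∀ n, MeasurableSet (s n))
    (hs : iIndepSet s P) (hsum : ∑' n, P (s n) = ∞) :
    ∀ᵐ ω ∂P, ∃ᶠ n in atTop, ω ∈ s n := by
  have := hs.isProbabilityMeasure
  have hlimsup : ∀ᵐ ω ∂P, ω ∈ limsup s atTop :=
    (ae_iff_measure_eq (MeasurableSet.measurableSet_limsup hsm).nullMeasurableSet).mpr
      (by rw [measure_univ]; exact measure_limsup_eq_one hsm hs hsum)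
  filter_upwards [hlimsup] with ω hω using mem_limsup_iff_frequently_mem.mp hω

theorem ae_frequently_eq_of_iIndepFun {β : Type*} [MeasurableSpace β]
    [MeasurableSingletonClass β] {B : ℕ → Ω → β} (hBmeas : ∀ n, Measurable (B n))
    (hB : iIndepFun B P) {b : β} {p : ℝ≥0∞} (hp : p ≠ 0)
    (hBp : Tendsto (fun n => P {ω | B n ω = b}) atTop (𝓝 p)) :
    ∀ᵐ ω ∂P, ∃ᶠ n in atTop, B n ω = b := by
  have hsm : ∀ n, MeasurableSet (B n ⁻¹' {b}) := fun n => hBmeas n (measurableSet_singleton b)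
  have hs : iIndepSet (fun n => B n ⁻¹' {b}) P := by
    rw [iIndepSet_iff_meas_biInter hsm]
    exact fun t => hB.meas_biInter fun i _ => ⟨{b}, measurableSet_singleton b, rfl⟩
  exact ae_frequently_mem_of_iIndepSet hsm hs (ENNReal.tsum_eq_top_of_tendsto_ne_zero hBp hp)

end BorelCantelli

theorem polarization_limit_zero_one_general
    {Ω : Type*} [MeasurableSpace Ω] (P : Measure Ω) [IsProbabilityMeasure P]
    (B : ℕ → Ω → ℕ) (hBmeas : ∀ n, Measurable (B n))
    (hBiid : iIndepFun B P)
    (hB0 : ∀ n, 1 ≤ n → P {ω | B n ω = 0} = 1/2)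
    (q : ℝ)
    (X : ℕ → Ω → ℝ)
    (Xinf : Ω → ℝ)
    (hconv : ∀ᵐ ω ∂P, Tendsto (fun n => X n ω) atTop (nhds (Xinf ω)))
    (hdyn : ∀ n ω, (X n ω ≠ 0 ∧ X n ω ≠ 1 →
        (B (n+1) ω = 1 → X n ω ≤ X (n+1) ω ∧ X (n+1) ω ≤ q * X n ω) ∧
        (B (n+1) ω = 0 → X (n+1) ω = X n ω ^ 2)) ∧
      ((X n ω = 0 ∨ X n ω = 1) → X (n+1) ω = X n ω))
    :
    P {ω | Xinf ω = 0 ∨ Xinf ω = 1} = 1 := by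
  have hsq : ∀ n ω, B (n + 1) ω = 0 → X (n + 1) ω = X n ω ^ 2 := by
    intro n ω hB
    by_cases hX : X n ω = 0 ∨ X n ω = 1
    · rw [(hdyn n ω).2 hX]
      rcases hX with h | h <;> simp [h]
    · exact ((hdyn n ω).1 (not_or.mp hX)).2 hB
  have hfreq : ∀ᵐ ω ∂P, ∃ᶠ n in atTop, B (n + 1) ω = 0 :=
    ae_frequently_eq_of_iIndepFun (fun n => hBmeas (n + 1)) (hBiid.precomp Nat.succ_injective)
      (by norm_num) (tendsto_const_nhds.congr fun n => (hB0 (n + 1) n.succ_pos).symm)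
  have hae : ∀ᵐ ω ∂P, Xinf ω = 0 ∨ Xinf ω = 1 := by
    filter_upwards [hfreq, hconv] with ω hω hc
    exact eq_zero_or_one_of_tendsto_of_frequently_sq hc (hω.mono fun n => hsq n ω)
  rw [measure_congr (eventuallyEq_univ.mpr hae), measure_univ]

theorem polarization_limit_zero_one
    {Ω : Type*} [MeasurableSpace Ω] (P : Measure Ω) [IsProbabilityMeasure P]
    (B : ℕ → Ω → ℕ) (hBmeas : ∀ n, Measurable (B n))
    (hBiid : iIndepFun B P)
    (hB1 : ∀ n, 1 ≤ n → P {ω | B n ω = 1} = 1/2)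
    (hB0 : ∀ n, 1 ≤ n → P {ω | B n ω = 0} = 1/2)
    (q : ℝ) (hq : 1 ≤ q)
    (X : ℕ → Ω → ℝ) (hXmeasAmb : ∀ n, Measurable (X n))
    (hX01 : ∀ n ω, X n ω ∈ Set.Icc (0:ℝ) 1)
    (G : ℕ → MeasurableSpace Ω)
    (hG : ∀ n, G n = (MeasurableSpace.comap (X 0) inferInstance) ⊔
        ⨆ i ∈ Finset.Icc 1 n, MeasurableSpace.comap (B i) inferInstance)
    (hXmeas : ∀ n, Measurable[G n] (X n))
    (hindep : ∀ n, Indep (MeasurableSpace.comap (B (n+1)) inferInstance) (G n) P)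
    (Xinf : Ω → ℝ) (hXinfmeas : Measurable Xinf)
    (hconv : ∀ᵐ ω ∂P, Tendsto (fun n => X n ω) atTop (nhds (Xinf ω)))
    (hdyn : ∀ n ω, (X n ω ≠ 0 ∧ X n ω ≠ 1 →
        (B (n+1) ω = 1 → X n ω ≤ X (n+1) ω ∧ X (n+1) ω ≤ q * X n ω) ∧
        (B (n+1) ω = 0 → X (n+1) ω = X n ω ^ 2)) ∧
      ((X n ω = 0 ∨ X n ω = 1) → X (n+1) ω = X n ω))
    :
    P {ω | Xinf ω = 0 ∨ Xinf ω = 1} = 1 :=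
  polarization_limit_zero_one_general P B hBmeas hBiid hB0 q X Xinf hconv hdyn
end

section
/- Let (X_n)_{n≥0} be a polarization-type process with limit X_∞. Then for any fixed ρ ∈ (0,1), lim_{n→∞} P(X_n ≤ ρ^n) = P(X_∞ = 0). -/
/-!
Along a path with `X_n → 0`, once `X_n ≤ e^{-c}` a squaring step multiplies `X_n` by at most
`e^{-c}` and an expanding step by at most `q`, so `log X_n` grows at most like
`Σ_{i<n} (log q - c·[B_{i+1} = 0])`. By the strong law of large numbers the average of these
increments tends to `log q - c/2`, which is below `log ρ` for `c` large, so eventually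
`X_n ≤ ρ^n`. Along a path with `X_∞ > 0`, eventually `X_n > X_∞/2 > ρ^n`. Hence the indicators of
`{X_n ≤ ρ^n}` converge almost surely to that of `{X_∞ = 0}`, and dominated convergence concludes.
-/

open MeasureTheory ProbabilityTheory Filter Finset Real
open scoped Topology

theorem tendsto_inv_mul_sum_const_sub_mul {y : ℕ → ℝ} {ℓ : ℝ}
    (h : Tendsto (fun n : ℕ => (n : ℝ)⁻¹ * ∑ i ∈ range n, y i) atTop (𝓝 ℓ)) (a c : ℝ) :
    Tendsto (fun n : ℕ => (n : ℝ)⁻¹ * ∑ i ∈ range n, (a - c * y i)) atTop (𝓝 (a - c * ℓ)) := by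
  refine (tendsto_const_nhds.sub (h.const_mul c)).congr' ?_
  filter_upwards [eventually_ne_atTop 0] with n hn
  rw [sum_sub_distrib, ← mul_sum, sum_const, card_range, nsmul_eq_mul]
  field_simp

theorem eventually_le_pow_of_le_mul_exp {x d : ℕ → ℝ} {m : ℕ} {μ ρ : ℝ} (hρ : 0 < ρ)
    (hxm : x m ≤ 1) (hstep : ∀ n ≥ m, x (n + 1) ≤ x n * exp (d n))
    (hd : Tendsto (fun n : ℕ => (n : ℝ)⁻¹ * ∑ i ∈ range n, d i) atTop (𝓝 μ))
    (hμ : μ < log ρ) :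
    ∀ᶠ n in atTop, x n ≤ ρ ^ n := by
  have hbound : ∀ n ≥ m, x n ≤ exp (∑ i ∈ Ico m n, d i) := by
    intro n hn
    induction n, hn using Nat.le_induction with
    | base => simpa using hxm
    | succ n hn ih =>
      rw [sum_Ico_succ_top hn, exp_add]
      exact (hstep n hn).trans (mul_le_mul_of_nonneg_right ih (exp_pos _).le)
  have hlim : Tendsto (fun n : ℕ => (n : ℝ)⁻¹ * ∑ i ∈ Ico m n, d i) atTop (𝓝 μ) := by
    have hhead : Tendsto (fun n : ℕ => (n : ℝ)⁻¹ * ∑ i ∈ range m, d i) atTop (𝓝 0) := by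
      simpa using tendsto_inv_atTop_nhds_zero_nat.mul_const (∑ i ∈ range m, d i)
    refine (sub_zero μ ▸ hd.sub hhead).congr' ?_
    filter_upwards [eventually_ge_atTop m] with n hn
    rw [← mul_sub, sum_Ico_eq_sub _ hn]
  filter_upwards [hlim.eventually_lt_const hμ, eventually_ge_atTop m, eventually_gt_atTop 0]
    with n hlt hn hn0
  rw [inv_mul_lt_iff₀ (by positivity)] at hlt
  calc x n ≤ exp (∑ i ∈ Ico m n, d i) := hbound n hn
    _ ≤ exp (n * log ρ) := exp_le_exp.2 hlt.le
    _ = ρ ^ n := by rw [exp_nat_mul, exp_log hρ]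

theorem le_mul_exp_of_polarization_step {q c x x' : ℝ} {b : ℕ} (hq : 1 ≤ q) (hc : 0 < c)
    (hx : 0 ≤ x) (hxc : x ≤ exp (-c)) (hb : b = 0 ∨ b = 1)
    (hsq : x ≠ 0 → x ≠ 1 → b = 0 → x' = x ^ 2)
    (hup : x ≠ 0 → x ≠ 1 → b = 1 → x' ≤ q * x)
    (habs : x = 0 → x' = x) :
    x' ≤ x * exp (log q - c * if b = 0 then 1 else 0) := by
  rcases hx.eq_or_lt with rfl | hxpos
  · simp [habs rfl]
  have hx1 : x ≠ 1 := (hxc.trans_lt (exp_lt_one_iff.2 (neg_lt_zero.2 hc))).ne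
  rcases hb with rfl | rfl
  · rw [hsq hxpos.ne' hx1 rfl, if_pos rfl, mul_one, sq]
    calc x * x ≤ x * exp (-c) := mul_le_mul_of_nonneg_left hxc hx
      _ ≤ x * exp (log q - c) := by gcongr; linarith [log_nonneg hq]
  · rw [if_neg one_ne_zero, mul_zero, sub_zero, exp_log (by linarith), mul_comm]
    exact hup hxpos.ne' hx1 rfl

theorem eventually_le_pow_of_tendsto_zero {q ρ : ℝ} {x : ℕ → ℝ} {b : ℕ → ℕ}
    (hq : 1 ≤ q) (hρ : 0 < ρ) (hx0 : ∀ n, 0 ≤ x n) (hb : ∀ n, b (n + 1) = 0 ∨ b (n + 1) = 1)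
    (hsq : ∀ n, x n ≠ 0 → x n ≠ 1 → b (n + 1) = 0 → x (n + 1) = x n ^ 2)
    (hup : ∀ n, x n ≠ 0 → x n ≠ 1 → b (n + 1) = 1 → x (n + 1) ≤ q * x n)
    (habs : ∀ n, x n = 0 → x (n + 1) = x n)
    (hx : Tendsto x atTop (𝓝 0))
    (hfreq : Tendsto (fun n : ℕ => (n : ℝ)⁻¹ * ∑ i ∈ range n, if b (i + 1) = 0 then (1 : ℝ) else 0)
      atTop (𝓝 (1 / 2))) :
    ∀ᶠ n in atTop, x n ≤ ρ ^ n := by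
  -- chosen so that the mean increment `log q - c / 2` is `-|log ρ| - 1 < log ρ`
  set c := 2 * (log q + |log ρ| + 1)
  have hc : 0 < c := by positivity [log_nonneg hq]
  obtain ⟨m, hm⟩ := (hx.eventually_le_const (exp_pos (-c))).exists_forall_of_atTop
  refine eventually_le_pow_of_le_mul_exp hρ ((hm m le_rfl).trans (exp_le_one_iff.2 (by linarith)))
    (fun n hn => le_mul_exp_of_polarization_step hq hc (hx0 n) (hm n hn) (hb n) (hsq n) (hup n)
      (habs n)) (tendsto_inv_mul_sum_const_sub_mul hfreq (log q) c) ?_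
  linarith [neg_abs_le (log ρ)]

section Probabilistic

variable {Ω : Type*} [MeasurableSpace Ω] {P : Measure Ω}

theorem identDistrib_of_measure_preimage_singleton {α : Type*} [MeasurableSpace α] [Countable α]
    [MeasurableSingletonClass α] {f g : Ω → α} (hf : Measurable f) (hg : Measurable g)
    (h : ∀ a, P (f ⁻¹' {a}) = P (g ⁻¹' {a})) : IdentDistrib f g P P where
  aemeasurable_fst := hf.aemeasurable
  aemeasurable_snd := hg.aemeasurable
  map_eq := Measure.ext_of_singleton fun a => by
    rw [Measure.map_apply hf (measurableSet_singleton a), Measure.map_apply hg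
      (measurableSet_singleton a), h]

variable [IsProbabilityMeasure P]

theorem ae_eq_zero_or_eq_one {f : Ω → ℕ} (hf : Measurable f) (h0 : P {ω | f ω = 0} = 1 / 2)
    (h1 : P {ω | f ω = 1} = 1 / 2) :
    ∀ᵐ ω ∂P, f ω = 0 ∨ f ω = 1 := by
  refine (ae_iff_prob_eq_one (measurableSet_setOfPred.1 ?_)).2 ?_
  · exact (hf (measurableSet_singleton 0)).union (hf (measurableSet_singleton 1))
  have hdisj : Disjoint {ω | f ω = 0} {ω | f ω = 1} :=
    Set.disjoint_left.2 fun ω h0 h1 => by simp_all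
  rw [Set.ofPred_or, measure_union hdisj (hf (measurableSet_singleton 1)), h0, h1,
    ENNReal.add_halves]

theorem identDistrib_of_half_half {f g : Ω → ℕ} (hf : Measurable f) (hg : Measurable g)
    (hf0 : P {ω | f ω = 0} = 1 / 2) (hf1 : P {ω | f ω = 1} = 1 / 2)
    (hg0 : P {ω | g ω = 0} = 1 / 2) (hg1 : P {ω | g ω = 1} = 1 / 2) :
    IdentDistrib f g P P := by
  refine identDistrib_of_measure_preimage_singleton hf hg fun k => ?_
  rcases k with _ | _ | k
  · exact hf0.trans hg0.symm
  · exact hf1.trans hg1.symm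
  have hnull : ∀ {h : Ω → ℕ}, (∀ᵐ ω ∂P, h ω = 0 ∨ h ω = 1) → P (h ⁻¹' {k + 2}) = 0 :=
    fun hbin => measure_eq_zero_iff_ae_notMem.2 <| hbin.mono fun ω hω => by
      simp only [Set.mem_preimage, Set.mem_singleton_iff]; omega
  rw [hnull (ae_eq_zero_or_eq_one hf hf0 hf1), hnull (ae_eq_zero_or_eq_one hg hg0 hg1)]

theorem ae_tendsto_frequency_eq_zero {B : ℕ → Ω → ℕ} (hBmeas : ∀ n, Measurable (B n))
    (hBiid : iIndepFun B P)
    (hB1 : ∀ n, 1 ≤ n → P {ω | B n ω = 1} = 1 / 2)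
    (hB0 : ∀ n, 1 ≤ n → P {ω | B n ω = 0} = 1 / 2) :
    ∀ᵐ ω ∂P, Tendsto (fun n : ℕ => (n : ℝ)⁻¹ * ∑ i ∈ range n,
      if B (i + 1) ω = 0 then (1 : ℝ) else 0) atTop (𝓝 (1 / 2)) := by
  set f : ℕ → ℝ := fun k => if k = 0 then 1 else 0
  have hf : Measurable f := measurable_from_top
  have hident : ∀ i, IdentDistrib (f ∘ B (i + 1)) (f ∘ B (0 + 1)) P P := fun i =>
    (identDistrib_of_half_half (hBmeas _) (hBmeas _) (hB0 _ i.succ_pos) (hB1 _ i.succ_pos)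
      (hB0 1 le_rfl) (hB1 1 le_rfl)).comp hf
  have hind : f ∘ B 1 = {ω | B 1 ω = 0}.indicator 1 := by
    ext ω
    simp [f, Set.indicator_apply]
  have hBset : MeasurableSet {ω | B 1 ω = 0} := hBmeas 1 (measurableSet_singleton 0)
  have hint : Integrable (f ∘ B 1) P := hind ▸ (integrable_const 1).indicator hBset
  have hmean : P[f ∘ B 1] = 1 / 2 := by
    rw [hind, integral_indicator_one hBset, measureReal_def, hB0 1 le_rfl]
    simp
  have hslln := strong_law_ae (fun i => f ∘ B (i + 1)) hint
    (fun i j hij => (hBiid.indepFun (by simpa using hij)).comp hf hf) hident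
  rw [zero_add, hmean] at hslln
  simpa [f] using hslln

end Probabilistic

theorem polarization_concentration_general
    {Ω : Type*} [MeasurableSpace Ω] (P : Measure Ω) [IsProbabilityMeasure P]
    (B : ℕ → Ω → ℕ) (hBmeas : ∀ n, Measurable (B n))
    (hBiid : iIndepFun B P)
    (hB1 : ∀ n, 1 ≤ n → P {ω | B n ω = 1} = 1/2)
    (hB0 : ∀ n, 1 ≤ n → P {ω | B n ω = 0} = 1/2)
    (q : ℝ) (hq : 1 ≤ q)
    (X : ℕ → Ω → ℝ) (hXmeasAmb : ∀ n, Measurable (X n))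
    (hX01 : ∀ n ω, X n ω ∈ Set.Icc (0:ℝ) 1)
    (Xinf : Ω → ℝ) (hXinfmeas : Measurable Xinf)
    (hconv : ∀ᵐ ω ∂P, Tendsto (fun n => X n ω) atTop (nhds (Xinf ω)))
    (hdyn : ∀ n ω, (X n ω ≠ 0 ∧ X n ω ≠ 1 →
        (B (n+1) ω = 1 → X n ω ≤ X (n+1) ω ∧ X (n+1) ω ≤ q * X n ω) ∧
        (B (n+1) ω = 0 → X (n+1) ω = X n ω ^ 2)) ∧
      ((X n ω = 0 ∨ X n ω = 1) → X (n+1) ω = X n ω))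
    (ρ : ℝ) (hρ : ρ ∈ Set.Ioo (0:ℝ) 1) :
    Tendsto (fun n => P {ω | X n ω ≤ ρ ^ n}) atTop (nhds (P {ω | Xinf ω = 0})) := by
  refine tendsto_measure_of_ae_tendsto_indicator_of_isFiniteMeasure atTop
    (hXinfmeas (measurableSet_singleton 0)) (fun n => measurableSet_le (hXmeasAmb n)
      measurable_const) ?_
  have hBbin : ∀ᵐ ω ∂P, ∀ n, B (n + 1) ω = 0 ∨ B (n + 1) ω = 1 := ae_all_iff.2 fun n =>
    ae_eq_zero_or_eq_one (hBmeas _) (hB0 _ n.succ_pos) (hB1 _ n.succ_pos)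
  filter_upwards [hconv, hBbin, ae_tendsto_frequency_eq_zero hBmeas hBiid hB1 hB0]
    with ω hω hbω hfreq
  rcases (ge_of_tendsto' hω fun n => (hX01 n ω).1).eq_or_lt with hzero | hpos
  · have hx : Tendsto (fun n => X n ω) atTop (𝓝 0) := hzero ▸ hω
    filter_upwards [eventually_le_pow_of_tendsto_zero (x := fun n => X n ω) (b := fun n => B n ω)
      hq hρ.1 (fun n => (hX01 n ω).1) hbω (fun n h0 h1 => ((hdyn n ω).1 ⟨h0, h1⟩).2)
      (fun n h0 h1 hb => (((hdyn n ω).1 ⟨h0, h1⟩).1 hb).2) (fun n h => (hdyn n ω).2 (Or.inl h))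
      hx hfreq] with n hn
    exact iff_of_true hn hzero.symm
  · filter_upwards [hω.eventually_const_lt (half_lt_self hpos),
      (tendsto_pow_atTop_nhds_zero_of_lt_one hρ.1.le hρ.2).eventually_lt_const (half_pos hpos)]
      with n hX hρn
    exact iff_of_false (by linarith) hpos.ne'

theorem polarization_concentration
    {Ω : Type*} [MeasurableSpace Ω] (P : Measure Ω) [IsProbabilityMeasure P]
    (B : ℕ → Ω → ℕ) (hBmeas : ∀ n, Measurable (B n))
    (hBiid : iIndepFun B P)
    (hB1 : ∀ n, 1 ≤ n → P {ω | B n ω = 1} = 1/2)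
    (hB0 : ∀ n, 1 ≤ n → P {ω | B n ω = 0} = 1/2)
    (q : ℝ) (hq : 1 ≤ q)
    (X : ℕ → Ω → ℝ) (hXmeasAmb : ∀ n, Measurable (X n))
    (hX01 : ∀ n ω, X n ω ∈ Set.Icc (0:ℝ) 1)
    (G : ℕ → MeasurableSpace Ω)
    (hG : ∀ n, G n = (MeasurableSpace.comap (X 0) inferInstance) ⊔
        ⨆ i ∈ Finset.Icc 1 n, MeasurableSpace.comap (B i) inferInstance)
    (hXmeas : ∀ n, Measurable[G n] (X n))
    (hindep : ∀ n, Indep (MeasurableSpace.comap (B (n+1)) inferInstance) (G n) P)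
    (Xinf : Ω → ℝ) (hXinfmeas : Measurable Xinf)
    (hconv : ∀ᵐ ω ∂P, Tendsto (fun n => X n ω) atTop (nhds (Xinf ω)))
    (hdyn : ∀ n ω, (X n ω ≠ 0 ∧ X n ω ≠ 1 →
        (B (n+1) ω = 1 → X n ω ≤ X (n+1) ω ∧ X (n+1) ω ≤ q * X n ω) ∧
        (B (n+1) ω = 0 → X (n+1) ω = X n ω ^ 2)) ∧
      ((X n ω = 0 ∨ X n ω = 1) → X (n+1) ω = X n ω))
    (ρ : ℝ) (hρ : ρ ∈ Set.Ioo (0:ℝ) 1) :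
    Tendsto (fun n => P {ω | X n ω ≤ ρ ^ n}) atTop (nhds (P {ω | Xinf ω = 0})) :=
  polarization_concentration_general P B hBmeas hBiid hB1 hB0 q hq X hXmeasAmb hX01 Xinf hXinfmeas
    hconv hdyn ρ hρ
end

section
/- Let q ≥ 1, let m < n be natural numbers, let b_{m+1}, …, b_n ∈ {0,1}, and let l_m, l_{m+1}, …, l_n be real numbers satisfying the recursion l_{i+1} = 2·l_i if b_{i+1} = 1 and l_{i+1} = l_i + log₂ q if b_{i+1} = 0, for m ≤ i < n. Then, writing s = Σ_{i=m+1}^n b_i, one has l_n ≤ 2^s · (l_m + (n − m − s)·log₂ q). -/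
theorem L_process_upper_bound
    (q : ℝ) (hq : 1 ≤ q) (m n : ℕ) (hmn : m < n)
    (b : ℕ → ℕ) (hb : ∀ i, m < i → i ≤ n → b i = 0 ∨ b i = 1)
    (l : ℕ → ℝ)
    (hrec : ∀ i, m ≤ i → i < n →
      (b (i+1) = 1 → l (i+1) = 2 * l i) ∧
      (b (i+1) = 0 → l (i+1) = l i + Real.logb 2 q)) :
    l n ≤ 2 ^ (∑ i ∈ Finset.Icc (m+1) n, b i) *
      (l m + ((n:ℝ) - m - (∑ i ∈ Finset.Icc (m+1) n, b i : ℕ)) * Real.logb 2 q) := by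
  have hlog : 0 ≤ Real.logb 2 q := Real.logb_nonneg (by norm_num) hq
  revert hb hrec
  induction n, hmn using Nat.le_induction with
  | base =>
    intro hb hrec
    rw [Finset.Icc_self, Finset.sum_singleton]
    obtain h | h := hb (m+1) (by omega) (by omega)
    · have h2 := (hrec m le_rfl (by omega)).2 h
      rw [h, h2]
      push_cast
      ring_nf
      simp
    · have h2 := (hrec m le_rfl (by omega)).1 h
      rw [h, h2]
      push_cast
      nlinarith [hlog]
  | succ n hn ih =>
    intro hb hrec
    have hb' : ∀ i, m < i → i ≤ n → b i = 0 ∨ b i = 1 :=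
      fun i h1 h2 => hb i h1 (by omega)
    have hrec' : ∀ i, m ≤ i → i < n →
        (b (i+1) = 1 → l (i+1) = 2 * l i) ∧
        (b (i+1) = 0 → l (i+1) = l i + Real.logb 2 q) :=
      fun i h1 h2 => hrec i h1 (by omega)
    have IH := ih hb' hrec'
    rw [Finset.sum_Icc_succ_top (by omega : m+1 ≤ n+1)]
    set s := ∑ i ∈ Finset.Icc (m+1) n, b i with hs
    have hpow : (1:ℝ) ≤ 2 ^ s := one_le_pow₀ (by norm_num)
    obtain h | h := hb (n+1) (by omega) (by omega)
    · have h2 := (hrec n (by omega) (by omega)).2 h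
      rw [h, h2]
      simp only [add_zero]
      push_cast at IH ⊢
      nlinarith [mul_nonneg (sub_nonneg.2 hpow) hlog]
    · have h2 := (hrec n (by omega) (by omega)).1 h
      rw [h, h2, pow_succ]
      push_cast at IH ⊢
      nlinarith [IH]
end

section
/- Let q ≥ 1, let m < n be natural numbers with m ≥ 1, let γ ∈ [0,1], let ε > 0, let b_{m+1}, …, b_n ∈ {0,1} with s = Σ_{i=m+1}^n b_i ≥ γ·(n − m), and let l_m, …, l_n be real numbers satisfying l_{i+1} = 2·l_i if b_{i+1} = 1 and l_{i+1} = l_i + log₂ q if b_{i+1} = 0. If l_m ≤ −(1 − γ)·(n − m)·log₂ q − ε·m, then l_n ≤ −2^{γ(n−m)}·ε·m. -/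
theorem L_process_bootstrap_bound
    (q : ℝ) (hq : 1 ≤ q) (m n : ℕ) (hm : 1 ≤ m) (hmn : m < n)
    (γ : ℝ) (hγ : γ ∈ Set.Icc (0:ℝ) 1) (ε : ℝ) (hε : 0 < ε)
    (b : ℕ → ℕ) (hb : ∀ i, m < i → i ≤ n → b i = 0 ∨ b i = 1)
    (hs : γ * ((n:ℝ) - m) ≤ ((∑ i ∈ Finset.Icc (m+1) n, b i : ℕ) : ℝ))
    (l : ℕ → ℝ)
    (hrec : ∀ i, m ≤ i → i < n →
      (b (i+1) = 1 → l (i+1) = 2 * l i) ∧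
      (b (i+1) = 0 → l (i+1) = l i + Real.logb 2 q))
    (hlm : l m ≤ -(1 - γ) * ((n:ℝ) - m) * Real.logb 2 q - ε * m) :
    l n ≤ -(2:ℝ) ^ (γ * ((n:ℝ) - m)) * (ε * m) := by
  set L := Real.logb 2 q with hLdef
  have hL : 0 ≤ L := Real.logb_nonneg one_lt_two hq
  set S : ℕ → ℕ := fun i => ∑ j ∈ Finset.Icc (m+1) i, b j with hSdef
  have key : ∀ k, m + k ≤ n →
      l (m+k) ≤ 2^(S (m+k)) * (l m + ((k : ℝ) - S (m+k)) * L) := by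
    intro k
    induction k with
    | zero =>
      intro _
      have hS0 : S m = 0 := by
        have : Finset.Icc (m+1) m = ∅ := Finset.Icc_eq_empty_of_lt (Nat.lt_succ_self m)
        simp [hSdef, this]
      simp [hS0]
    | succ k ih =>
      intro hk
      have hik : m + k < n := by omega
      have hbk := hb (m+k+1) (by omega) (by omega)
      have hSsucc : S (m+k+1) = S (m+k) + b (m+k+1) := by
        simp [hSdef, Finset.sum_Icc_succ_top (by omega : m+1 ≤ m+k+1)]
      have hrec' := hrec (m+k) (by omega) hik
      have ihh := ih (by omega)
      have h2 : (0:ℝ) < 2^(S (m+k)) := by positivity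
      have h1le : (1:ℝ) ≤ 2^(S (m+k)) := one_le_pow₀ (by norm_num)
      rcases hbk with h0 | h1
      · have hl : l (m+k+1) = l (m+k) + L := hrec'.2 h0
        have hS' : S (m+k+1) = S (m+k) := by omega
        have goal_eq : m + (k+1) = m+k+1 := rfl
        rw [goal_eq, hl, hS']
        push_cast
        nlinarith [mul_le_mul_of_nonneg_right h1le hL]
      · have hl : l (m+k+1) = 2 * l (m+k) := hrec'.1 h1
        have hS' : S (m+k+1) = S (m+k) + 1 := by omega
        have goal_eq : m + (k+1) = m+k+1 := rfl
        rw [goal_eq, hl, hS', pow_succ]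
        push_cast
        nlinarith [ihh]
  have hkey := key (n - m) (by omega)
  rw [show m + (n-m) = n from by omega] at hkey
  have hcast : (((n-m : ℕ)) : ℝ) = (n:ℝ) - m := by
    push_cast [Nat.cast_sub hmn.le]; ring
  rw [hcast] at hkey
  have hsn : γ * ((n:ℝ) - m) ≤ (S n : ℝ) := hs
  have hz : ((n:ℝ) - m - S n) * L ≤ (1-γ)*((n:ℝ)-m)*L := by nlinarith
  have h2 : l m + ((n:ℝ) - m - (S n:ℝ)) * L ≤ -(ε*m) := by
    have := hlm; nlinarith
  have h3 : l n ≤ 2^(S n) * (-(ε*m)) :=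
    le_trans hkey (mul_le_mul_of_nonneg_left h2 (by positivity))
  have h4 : (2:ℝ) ^ (γ*((n:ℝ)-m)) ≤ (2:ℝ)^(S n) := by
    rw [show ((2:ℝ)^(S n) : ℝ) = (2:ℝ)^((S n : ℕ) : ℝ) from (Real.rpow_natCast 2 (S n)).symm]
    exact Real.rpow_le_rpow_of_exponent_le one_le_two hsn
  have hεm : 0 < ε * m := by positivity
  nlinarith [h3, h4, hεm]
end

section
/- Let F be the 2×2 matrix [[1,0],[1,1]] over the field GF(2), and let F^{⊗n} denote its n-fold Kronecker power, a 2^n × 2^n matrix over GF(2). Then for every row index i ∈ {0, 1, …, 2^n − 1}, the number of nonzero entries in row i of F^{⊗n} equals 2^{w(i)}, where w(i) is the number of ones in the binary expansion of i. -/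
open Matrix

/-- The basic polarization matrix `F = [[1,0],[1,1]]` over `GF(2)`. -/
def polarF : Matrix (Fin 2) (Fin 2) (ZMod 2) := !![1, 0; 1, 1]

/-- The `n`-fold Kronecker power `F^{⊗n}` of `F`, a `2^n × 2^n` matrix over `GF(2)`,
with indices identified with `{0, …, 2^n − 1}` via binary expansions
(row `i` of `F ⊗ A` is obtained from row `i / 2^n` of `F` and row `i % 2^n` of `A`). -/
def polarFPow : (n : ℕ) → Matrix (Fin (2 ^ n)) (Fin (2 ^ n)) (ZMod 2)
  | 0 => fun _ _ => 1
  | n + 1 =>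
      Matrix.reindex
        (finProdFinEquiv.trans (finCongr (by rw [pow_succ, Nat.mul_comm])))
        (finProdFinEquiv.trans (finCongr (by rw [pow_succ, Nat.mul_comm])))
        (Matrix.kroneckerMap (· * ·) polarF (polarFPow n))

/-- Hamming weight of the binary expansion of a natural number. -/
def hammingWt (i : ℕ) : ℕ := (Nat.digits 2 i).count 1

/-!
The number of nonzero entries in a row is multiplicative under Kronecker products over a ring
without zero divisors. Row `i` of `F^{⊗(n+1)} = F ⊗ F^{⊗n}` is row `i / 2^n` (the leading
binary digit of `i`) of `F` times row `i % 2^n` of `F^{⊗n}`.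
Row `a` of `F` has weight `2^a`, and the Hamming weight is additive over this splitting of the
binary expansion, so induction on `n` gives `2^{w(i)}`.
-/

open Finset

theorem Nat.count_digits_add_base_pow_mul {b d k m n : ℕ} (hb : 1 < b) (hd : d ≠ 0)
    (hn : n < b ^ k) :
    (b.digits (n + b ^ k * m)).count d = (b.digits n).count d + (b.digits m).count d := by
  rcases Nat.eq_zero_or_pos m with rfl | hm
  · simp
  obtain ⟨j, rfl⟩ := Nat.exists_eq_add_of_le ((Nat.digits_length_le_iff hb n).2 hn)
  have hzeros : (List.replicate j 0).count d = 0 := List.count_eq_zero.2 (by simp [hd])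
  rw [← Nat.digits_append_zeroes_append_digits hb hm, List.count_append, List.count_append,
    hzeros, add_zero]

theorem hammingWt_add_two_pow_mul {k m n : ℕ} (hn : n < 2 ^ k) :
    hammingWt (n + 2 ^ k * m) = hammingWt n + hammingWt m :=
  Nat.count_digits_add_base_pow_mul one_lt_two one_ne_zero hn

theorem hammingWt_of_lt_two {a : ℕ} (ha : a < 2) : hammingWt a = a := by
  interval_cases a <;> rfl

namespace Matrix

variable {l m n o R : Type*}

def rowWeight [Fintype m] [Zero R] [DecidableEq R] (M : Matrix l m R) (i : l) : ℕ :=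
  #{j | M i j ≠ 0}

theorem rowWeight_reindex [Fintype m] [Fintype o] [Zero R] [DecidableEq R]
    (eₗ : l ≃ n) (eₘ : m ≃ o) (M : Matrix l m R) (i : n) :
    rowWeight (reindex eₗ eₘ M) i = rowWeight M (eₗ.symm i) := by
  unfold rowWeight
  exact card_equiv eₘ.symm fun _ => by simp only [mem_filter_univ]; rfl

theorem rowWeight_kroneckerMap_mul [Fintype m] [Fintype n] [MulZeroClass R] [NoZeroDivisors R]
    [DecidableEq R] (A : Matrix l m R) (B : Matrix o n R) (i : l) (k : o) :
    rowWeight (kroneckerMap (· * ·) A B) (i, k) = rowWeight A i * rowWeight B k := by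
  simp only [rowWeight, kroneckerMap_apply, ne_eq, mul_eq_zero, not_or]
  rw [← card_product, ← filter_product, univ_product_univ]

end Matrix

theorem rowWeight_polarF (a : Fin 2) : rowWeight polarF a = 2 ^ (a : ℕ) := by
  fin_cases a <;> decide

theorem rowWeight_polarFPow (n : ℕ) (i : Fin (2 ^ n)) :
    rowWeight (polarFPow n) i = 2 ^ hammingWt i := by
  induction n with
  | zero =>
    obtain rfl : i = 0 := by omega
    decide
  | succ n ih =>
    rw [polarFPow, rowWeight_reindex, rowWeight_kroneckerMap_mul, rowWeight_polarF, ih, ← pow_add]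
    congr 1
    change (i : ℕ) / 2 ^ n + hammingWt ((i : ℕ) % 2 ^ n) = hammingWt i
    have hdiv : (i : ℕ) / 2 ^ n < 2 := Nat.div_lt_of_lt_mul (pow_succ 2 n ▸ i.isLt)
    conv_rhs => rw [← Nat.mod_add_div i (2 ^ n)]
    rw [hammingWt_add_two_pow_mul (Nat.mod_lt _ (by positivity)), hammingWt_of_lt_two hdiv,
      add_comm]

theorem row_weight_kronecker_pow (n : ℕ) (i : Fin (2 ^ n)) :
    (Finset.univ.filter (fun j => polarFPow n i j ≠ 0)).card = 2 ^ hammingWt i.val :=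
  rowWeight_polarFPow n i
end

section
/- Let F be the 2×2 matrix [[1,0],[1,1]] over GF(2) and F^{⊗n} its n-fold Kronecker power. Let I be a nonempty subset of {0, 1, …, 2^n − 1} and let C be the GF(2)-linear span of the rows of F^{⊗n} indexed by I. Then the minimum Hamming weight over all nonzero codewords of C equals min_{i∈I} 2^{w(i)}, where w(i) is the number of ones in the binary expansion of i. -/
/-!
Index the coordinates of `F^{⊗(n+1)}` by pairs `(b, j)`, `b` the leading bit. A row of
`F^{⊗(n+1)}` with leading bit `0` is `(r | 0)`, one with leading bit `1` is `(r | r)`, where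
`r` is a row of `F^{⊗n}`: Plotkin's `(u + v | v)` construction. So a codeword `(c₀ | c₁)` of
the code of `I` has `c₁` in the code of `I₁ = {i | 2^n + i ∈ I}` and `c₀ - c₁` in the code
of `I₀ = {i | i ∈ I, i < 2^n}`. If `c₀ ≠ c₁`, induction gives
`wt c ≥ wt (c₀ - c₁) ≥ 2^{w(i)}` for some `i ∈ I₀`; otherwise `wt c = 2 wt c₁ ≥ 2^{w(i) + 1}`
for some `i ∈ I₁`. A single row, of weight `2^{w(i)}`, attains the bound.
-/

open Matrix

/-- Hamming weight (number of nonzero coordinates) of a vector over `GF(2)`. -/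
def codewordWt {N : ℕ} (c : Fin N → ZMod 2) : ℕ :=
  (Finset.univ.filter (fun j => c j ≠ 0)).card

open Submodule

theorem hammingWt_add_two_pow {n i : ℕ} (h : i < 2 ^ n) :
    hammingWt (i + 2 ^ n) = hammingWt i + 1 := by
  have hlen : (Nat.digits 2 i).length ≤ n := (Nat.digits_length_le_iff one_lt_two i).2 h
  have hdigits := Nat.digits_append_zeroes_append_digits (b := 2)
    (k := n - (Nat.digits 2 i).length) (m := 1) (n := i) one_lt_two one_pos
  rw [Nat.add_sub_cancel' hlen, mul_one] at hdigits
  rw [hammingWt, hammingWt, ← hdigits]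
  simp [List.count_replicate]

theorem codewordWt_eq_hammingNorm {N : ℕ} (c : Fin N → ZMod 2) :
    codewordWt c = hammingNorm c := rfl

theorem hammingNorm_sub_le {ι β : Type*} [Fintype ι] [AddGroup β] [DecidableEq β]
    (x y : ι → β) : hammingNorm (x - y) ≤ hammingNorm x + hammingNorm y := by
  have hdist : hammingNorm (x - y) = hammingDist x y := by
    simp [hammingNorm, hammingDist, sub_eq_zero]
  rw [hdist, ← hammingDist_zero_right, ← hammingDist_zero_left]
  exact hammingDist_triangle x 0 y

theorem hammingNorm_eq_add_of_equiv {ι κ β : Type*} [Fintype ι] [Fintype κ] [Zero β]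
    [DecidableEq β] (e : Fin 2 × ι ≃ κ) (c : κ → β) :
    hammingNorm c = hammingNorm (fun j => c (e (0, j))) + hammingNorm (fun j => c (e (1, j))) := by
  simp only [hammingNorm, Finset.card_filter]
  rw [← e.sum_comp, Fintype.sum_prod_type, Fin.sum_univ_two]

def polarIdx (n : ℕ) : Fin 2 × Fin (2 ^ n) ≃ Fin (2 ^ (n + 1)) :=
  finProdFinEquiv.trans (finCongr (by rw [pow_succ, Nat.mul_comm]))

theorem polarIdx_val (n : ℕ) (b : Fin 2) (i : Fin (2 ^ n)) :
    (polarIdx n (b, i) : ℕ) = i + 2 ^ n * b := rfl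

theorem hammingWt_polarIdx (n : ℕ) (b : Fin 2) (i : Fin (2 ^ n)) :
    hammingWt (polarIdx n (b, i)) = hammingWt i + b := by
  fin_cases b <;> simp [polarIdx_val, hammingWt_add_two_pow i.isLt]

def polarHalf (n : ℕ) (b : Fin 2) :
    (Fin (2 ^ (n + 1)) → ZMod 2) →ₗ[ZMod 2] (Fin (2 ^ n) → ZMod 2) :=
  LinearMap.funLeft (ZMod 2) (ZMod 2) (fun j => polarIdx n (b, j))

theorem codewordWt_eq_add_polarHalf (n : ℕ) (c : Fin (2 ^ (n + 1)) → ZMod 2) :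
    codewordWt c = codewordWt (polarHalf n 0 c) + codewordWt (polarHalf n 1 c) :=
  hammingNorm_eq_add_of_equiv (polarIdx n) c

theorem polarHalf_polarFPow (n : ℕ) (b b' : Fin 2) (i : Fin (2 ^ n)) :
    polarHalf n b' (polarFPow (n + 1) (polarIdx n (b, i))) = polarF b b' • polarFPow n i := by
  ext j
  simp [polarHalf, LinearMap.funLeft_apply, polarFPow, polarIdx, Matrix.kroneckerMap]

theorem codewordWt_polarFPow (n : ℕ) (i : Fin (2 ^ n)) :
    codewordWt (polarFPow n i) = 2 ^ hammingWt i := by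
  induction n with
  | zero => simp [Fin.fin_one_eq_zero i, hammingWt, codewordWt, polarFPow]
  | succ n ih =>
    obtain ⟨⟨b, i⟩, rfl⟩ := (polarIdx n).surjective i
    rw [codewordWt_eq_add_polarHalf, polarHalf_polarFPow, polarHalf_polarFPow,
      hammingWt_polarIdx]
    fin_cases b <;> simp [polarF, ih, codewordWt_eq_hammingNorm, pow_succ, mul_two]

theorem polarHalf_one_mem_span {n : ℕ} {s : Set (Fin (2 ^ (n + 1)))}
    {c : Fin (2 ^ (n + 1)) → ZMod 2}
    (hc : c ∈ span (ZMod 2) ((fun i => polarFPow (n + 1) i) '' s)) :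
    polarHalf n 1 c ∈
      span (ZMod 2) ((fun i => polarFPow n i) '' {i | polarIdx n (1, i) ∈ s}) := by
  refine (map_span_le _ _ _).2 ?_ (mem_map_of_mem hc)
  rintro _ ⟨k, hk, rfl⟩
  obtain ⟨⟨b, i⟩, rfl⟩ := (polarIdx n).surjective k
  rw [polarHalf_polarFPow]
  obtain rfl | rfl : b = 0 ∨ b = 1 := by omega
  · simp [polarF]
  · rw [show polarF 1 1 = 1 from rfl, one_smul]
    exact subset_span (Set.mem_image_of_mem _ hk)

theorem polarHalf_sub_mem_span {n : ℕ} {s : Set (Fin (2 ^ (n + 1)))}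
    {c : Fin (2 ^ (n + 1)) → ZMod 2}
    (hc : c ∈ span (ZMod 2) ((fun i => polarFPow (n + 1) i) '' s)) :
    polarHalf n 0 c - polarHalf n 1 c ∈
      span (ZMod 2) ((fun i => polarFPow n i) '' {i | polarIdx n (0, i) ∈ s}) := by
  refine (map_span_le (polarHalf n 0 - polarHalf n 1) _ _).2 ?_ (mem_map_of_mem hc)
  rintro _ ⟨k, hk, rfl⟩
  obtain ⟨⟨b, i⟩, rfl⟩ := (polarIdx n).surjective k
  rw [LinearMap.sub_apply, polarHalf_polarFPow, polarHalf_polarFPow, ← sub_smul]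
  obtain rfl | rfl : b = 0 ∨ b = 1 := by omega
  · rw [show polarF 0 0 - polarF 0 1 = 1 from rfl, one_smul]
    exact subset_span (Set.mem_image_of_mem _ hk)
  · simp [polarF]

theorem exists_two_pow_hammingWt_le_codewordWt {n : ℕ} {s : Set (Fin (2 ^ n))}
    {c : Fin (2 ^ n) → ZMod 2} (hc : c ∈ span (ZMod 2) ((fun i => polarFPow n i) '' s))
    (hc0 : c ≠ 0) :
    ∃ i ∈ s, 2 ^ hammingWt i ≤ codewordWt c := by
  induction n with
  | zero =>
    obtain ⟨i, hi⟩ : s.Nonempty := by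
      contrapose! hc0
      rwa [hc0, Set.image_empty, span_empty, mem_bot] at hc
    refine ⟨i, hi, ?_⟩
    simpa [Fin.fin_one_eq_zero i, hammingWt, codewordWt_eq_hammingNorm, Nat.one_le_iff_ne_zero]
      using hc0
  | succ n ih =>
    have hwt := codewordWt_eq_add_polarHalf n c
    by_cases hu : polarHalf n 0 c - polarHalf n 1 c = 0
    · have hv : polarHalf n 1 c ≠ 0 := by
        rintro hv
        rw [hv, sub_zero] at hu
        simp [hu, hv, codewordWt_eq_hammingNorm, hc0] at hwt
      obtain ⟨i, hi, hle⟩ := ih (polarHalf_one_mem_span hc) hv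
      refine ⟨polarIdx n (1, i), hi, ?_⟩
      rw [hammingWt_polarIdx, hwt, sub_eq_zero.1 hu]
      simp only [Fin.val_one, pow_succ]
      omega
    · obtain ⟨i, hi, hle⟩ := ih (polarHalf_sub_mem_span hc) hu
      refine ⟨polarIdx n (0, i), hi, ?_⟩
      rw [hammingWt_polarIdx, hwt]
      simp only [codewordWt_eq_hammingNorm] at hle ⊢
      exact hle.trans (hammingNorm_sub_le _ _)

theorem min_distance_polar_code (n : ℕ) (I : Finset (Fin (2 ^ n))) (hI : I.Nonempty) :
    IsLeast {k : ℕ | ∃ c ∈ Submodule.span (ZMod 2) ((fun i => polarFPow n i) '' ↑I),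
        c ≠ 0 ∧ codewordWt c = k}
      (I.inf' hI (fun i => 2 ^ hammingWt i.val)) := by
  refine ⟨?_, ?_⟩
  · obtain ⟨i, hi, hinf⟩ := Finset.exists_mem_eq_inf' hI (fun i => 2 ^ hammingWt i.val)
    have hwt := codewordWt_polarFPow n i
    refine ⟨polarFPow n i, subset_span ⟨i, hi, rfl⟩, ?_, hinf ▸ hwt⟩
    rw [← hammingNorm_ne_zero_iff, ← codewordWt_eq_hammingNorm, hwt]
    positivity
  · rintro _ ⟨c, hc, hc0, rfl⟩
    obtain ⟨i, hi, hle⟩ := exists_two_pow_hammingWt_le_codewordWt hc hc0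
    exact (Finset.inf'_le _ hi).trans hle
end
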